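/- arXiv:math/0006077 — 7 statements merged into one kernel-verified Lean document; each statement's English description precedes it below -/
import Mathlib

section
/- Let k be a field of characteristic zero, q ∈ k a primitive m-th root of unity (m ≥ 1, with m = 1 meaning q = 1), and suppose m q' = n, i.e. m divides n with q' = n/m. Then the Gaussian binomial coefficient C_q(n, m) evaluated at q equals n/m (as an element of k via the canonical map from ℤ). -/
/-- The Gaussian (q-)binomial coefficient, defined by the recursion
`C_q(n+1, k+1) = C_q(n, k) + q^(k+1) * C_q(n, k+1)`, `C_q(n, 0) = 1`. -/
def qBinom {k : Type*} [Field k] (q : k) : ℕ → ℕ → k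
  | _, 0 => 1
  | 0, _ + 1 => 0
  | n + 1, j + 1 => qBinom q n j + q ^ (j + 1) * qBinom q n (j + 1)

section aux

variable {k : Type*} [Field k] (q : k)

@[simp] lemma qBinom_zero_right (n : ℕ) : qBinom q n 0 = 1 := by
  cases n <;> rfl

@[simp] lemma qBinom_zero_succ (j : ℕ) : qBinom q 0 (j + 1) = 0 := rfl

lemma qBinom_succ_succ (n j : ℕ) :
    qBinom q (n + 1) (j + 1) = qBinom q n j + q ^ (j + 1) * qBinom q n (j + 1) := rfl

lemma qBinom_eq_zero : ∀ n j : ℕ, n < j → qBinom q n j = 0 := by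
  intro n
  induction n with
  | zero =>
    intro j hj
    obtain ⟨j', rfl⟩ := Nat.exists_eq_add_of_lt hj
    simp
  | succ n ih =>
    intro j hj
    obtain ⟨j', rfl⟩ : ∃ j', j = j' + 1 := ⟨j - 1, by omega⟩
    rw [qBinom_succ_succ, ih j' (by omega), ih (j' + 1) (by omega)]
    ring

lemma qBinom_self : ∀ n : ℕ, qBinom q n n = 1 := by
  intro n
  induction n with
  | zero => rfl
  | succ n ih =>
    rw [qBinom_succ_succ, ih, qBinom_eq_zero q n (n + 1) (by omega)]
    ring

/-- The second Pascal rule for Gaussian binomials. -/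
lemma qBinom_pascal2 : ∀ n d j : ℕ, d + j = n →
    qBinom q (n + 1) (j + 1) = q ^ d * qBinom q n j + qBinom q n (j + 1) := by
  intro n
  induction n with
  | zero =>
    intro d j h
    obtain ⟨rfl, rfl⟩ : d = 0 ∧ j = 0 := by omega
    simp [qBinom_succ_succ]
  | succ n ih =>
    intro d j h
    rcases j with _ | j'
    · -- j = 0, d = n + 1
      obtain rfl : d = n + 1 := by omega
      have e1 := qBinom_succ_succ q (n + 1) 0
      have e4 := qBinom_succ_succ q n 0
      have e3 := ih n 0 rfl
      simp only [zero_add, pow_one, qBinom_zero_right, mul_one] at e1 e3 e4 ⊢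
      linear_combination e1 + q * e3 - e4
    · -- j = j' + 1
      rcases d with _ | e
      · -- d = 0, j' = n
        obtain rfl : j' = n := by omega
        rw [qBinom_self, qBinom_eq_zero q (j' + 1) (j' + 2) (by omega), qBinom_self]
        ring
      · -- d = e + 1, with e + 1 + j' = n
        have hn' : e + 1 + j' = n := by omega
        have hn'' : e + (j' + 1) = n := by omega
        have D1 := qBinom_succ_succ q (n + 1) (j' + 1)
        have D2 := qBinom_succ_succ q n j'
        have D3 := qBinom_succ_succ q n (j' + 1)
        have A := ih (e + 1) j' hn'
        have B := ih e (j' + 1) hn''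
        linear_combination D1 + A - q ^ (e + 1) * D2 + q ^ (j' + 2) * B - D3

/-- Middle Gaussian binomials `C_q(m, j)`, `0 < j < m`, vanish at a primitive
`m`-th root of unity. -/
lemma qBinom_mid_zero (m : ℕ) (hq : q ^ m = 1)
    (hq' : ∀ j : ℕ, 0 < j → j < m → q ^ j ≠ 1) :
    ∀ j : ℕ, 0 < j → j < m → qBinom q m j = 0 := by
  have key : ∀ t j : ℕ, 0 < j → j + (t + 1) = m → qBinom q m j = 0 := by
    intro t
    induction t with
    | zero =>
      intro j hj hjm
      -- j + 1 = m
      have hp := qBinom_pascal2 q m 1 j (by omega)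
      rw [qBinom_succ_succ] at hp
      have hqm : q ^ (j + 1) = 1 := by
        have hj1 : j + 1 = m := by omega
        rw [hj1]; exact hq
      have hq1 : q ^ 1 ≠ 1 := hq' 1 (by omega) (by omega)
      have hz : (q ^ 1 - 1) * qBinom q m j = 0 := by
        rw [hqm] at hp; linear_combination -hp
      rcases mul_eq_zero.mp hz with h | h
      · exact absurd (by linear_combination h) hq1
      · exact h
    | succ t' ih =>
      intro j hj hjm
      have hp := qBinom_pascal2 q m (t' + 2) j (by omega)
      rw [qBinom_succ_succ] at hp
      have hz0 : qBinom q m (j + 1) = 0 := ih (j + 1) (by omega) (by omega)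
      have hq1 : q ^ (t' + 2) ≠ 1 := hq' (t' + 2) (by omega) (by omega)
      have hz : (q ^ (t' + 2) - 1) * qBinom q m j = 0 := by
        rw [hz0] at hp; linear_combination -hp
      rcases mul_eq_zero.mp hz with h | h
      · exact absurd (by linear_combination h) hq1
      · exact h
  intro j hj hjm
  exact key (m - j - 1) j hj (by omega)

/-- The block lemma: `C_q(n, j) = C_q(n % m, j)` for `j < m`, and
`C_q(n, m) = n / m`. -/
lemma qBinom_block (m : ℕ) (hm : 1 ≤ m) (hq : q ^ m = 1)
    (hmid : ∀ j : ℕ, 0 < j → j < m → qBinom q m j = 0) :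
    ∀ n : ℕ, (∀ j, j < m → qBinom q n j = qBinom q (n % m) j) ∧
      qBinom q n m = ((n / m : ℕ) : k) := by
  have hm0 : 0 < m := hm
  intro n
  induction n with
  | zero =>
    constructor
    · intro j _; rw [Nat.zero_mod]
    · rw [Nat.zero_div, qBinom_eq_zero q 0 m (by omega)]; simp
  | succ n ih =>
    obtain ⟨ih1, ih2⟩ := ih
    have hnm : n % m < m := Nat.mod_lt _ hm0
    obtain ⟨m', rfl⟩ : ∃ m', m = m' + 1 := ⟨m - 1, by omega⟩
    set M := m' + 1 with hM
    rcases Nat.lt_or_ge (n % M + 1) M with hlt | hge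
    · -- the residue increments
      have heq : n + 1 = M * (n / M) + (n % M + 1) := by
        rw [← Nat.add_assoc, Nat.div_add_mod]
      have hmod : (n + 1) % M = n % M + 1 := by
        rw [heq, Nat.mul_add_mod, Nat.mod_eq_of_lt hlt]
      have hdiv : (n + 1) / M = n / M := by
        rw [heq, Nat.mul_add_div hm0, Nat.div_eq_of_lt hlt, Nat.add_zero]
      constructor
      · intro j hjm
        rcases j with _ | j'
        · simp
        · rw [qBinom_succ_succ, ih1 j' (by omega), ih1 (j' + 1) hjm, hmod,
            ← qBinom_succ_succ]
      · -- part 2 : here n % M < m', and m' ≥ 1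
        have hm'1 : 1 ≤ m' := by omega
        rw [qBinom_succ_succ, ih2, hq, ih1 m' (by omega),
          qBinom_eq_zero q (n % M) m' (by omega), hdiv]
        ring
    · -- the residue wraps around : n % M = m'
      have hme : n % M + 1 = M := by omega
      have heq : n + 1 = M * (n / M + 1) := by
        have h := Nat.div_add_mod n M
        calc n + 1 = M * (n / M) + (n % M + 1) := by rw [← Nat.add_assoc, h]
          _ = M * (n / M) + M := by rw [hme]
          _ = M * (n / M + 1) := by rw [Nat.mul_add, Nat.mul_one]
      have hmod : (n + 1) % M = 0 := by rw [heq, Nat.mul_mod_right]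
      have hdiv : (n + 1) / M = n / M + 1 := by
        rw [heq, Nat.mul_div_cancel_left _ hm0]
      constructor
      · intro j hjm
        rcases j with _ | j'
        · simp
        · rw [qBinom_succ_succ, ih1 j' (by omega), ih1 (j' + 1) hjm,
            ← qBinom_succ_succ, hme, hmid (j' + 1) (by omega) hjm, hmod,
            qBinom_zero_succ]
      · have hone : qBinom q n m' = 1 := by
          rw [ih1 m' (by omega), (by omega : n % M = m'), qBinom_self]
        rw [qBinom_succ_succ, ih2, hq, hone, hdiv]
        push_cast
        ring

end aux

/-- In characteristic zero, if `q` is a primitive `m`-th root of unity and `n = m q'`,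
then the Gaussian binomial coefficient `C_q(n, m)` equals `n / m = q'` in `k`. -/
theorem qBinom_primitive_root_eval {k : Type*} [Field k] [CharZero k]
    (q : k) (m n q' : ℕ) (hm : 1 ≤ m)
    (hq : q ^ m = 1) (hq' : ∀ j : ℕ, 0 < j → j < m → q ^ j ≠ 1)
    (hn : n = m * q') :
    qBinom q n m = (q' : k) := by
  have hmid := qBinom_mid_zero q m hq hq'
  have hblock := (qBinom_block q m hm hq hmid n).2
  rw [hblock, hn, Nat.mul_div_cancel_left _ (by omega : 0 < m)]
end

section
/- Let H be a Hopf algebra over a field and g, g' grouplike elements. If h is g-primitive and h' is g'-primitive with g ≠ g', and the families of skew-primitive spaces are considered, then the spaces L_g = {h : Δ(h) = h⊗1 + g⊗h} for distinct g ∈ G form a direct sum (i.e., are linearly independent subspaces) modulo the span of elements 1 - g. -/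
open Coalgebra TensorProduct

/-- An element `g` of a coalgebra is grouplike if `Δ g = g ⊗ g` and `ε g = 1`. -/
def IsGrouplike {k H : Type*} [CommSemiring k] [AddCommMonoid H] [Module k H]
    [Coalgebra k H] (g : H) : Prop :=
  comul (R := k) g = g ⊗ₜ[k] g ∧ counit (R := k) g = (1 : k)

/-- The space `L_g = {h : Δ h = h ⊗ 1 + g ⊗ h}` of `g`-primitive (skew primitive)
elements, as the kernel of the linear map `h ↦ Δ h - (h ⊗ 1 + g ⊗ h)`. -/
noncomputable def skewPrimitive (k : Type*) {H : Type*} [CommRing k] [Ring H] [Algebra k H]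
    [Coalgebra k H] (g : H) : Submodule k H :=
  LinearMap.ker ((Coalgebra.comul : H →ₗ[k] H ⊗[k] H) -
    ((TensorProduct.mk k H H).flip 1 + TensorProduct.mk k H H g))

/-! Fix a grouplike `g` and a functional `δ` equal to `1` at `g` and `0` at every other
grouplike (grouplikes are linearly independent). Let `W` be the span of all grouplikes and
`S ≤ W` the span of the `1 - g'`. The map `x ↦ ∑ δ(x₁) x₂` sends a grouplike `u` to `δ(u) u`
and an `h`-primitive `x` to `δ(x) 1 + δ(h) x`. Read modulo `W`, it kills `S` and acts on the
image of `L_h` in `H / S` as multiplication by `δ(h)`: zero for `h ≠ g`, the quotient map for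
`h = g`. So the image of `L_g` meets the sum of the others only in classes of `L_g ∩ W`, and for
`x ∈ L_g ∩ W` the two formulas give `δ(x) g = δ(x) 1 + x`, i.e. `x = δ(x) (g - 1) ∈ S`. -/

open Module

lemma LinearIndepOn.exists_dual_eqOn {K V : Type*} [Field K] [AddCommGroup V] [Module K V]
    {s : Set V} (hs : LinearIndepOn K id s) (c : V → K) :
    ∃ f : Dual K V, Set.EqOn f c s := by
  refine ⟨(Basis.extend hs).constr K fun v => c v, fun v hv => ?_⟩
  have hv' : v ∈ hs.extend (Set.subset_univ _) := hs.subset_extend _ hv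
  simpa using (Basis.extend hs).constr_basis K (fun v => c v) ⟨v, hv'⟩

lemma iSupIndep_of_le_ker {ι R M N : Type*} [Semiring R] [AddCommMonoid M] [Module R M]
    [AddCommMonoid N] [Module R N] {p : ι → Submodule R M} (f : ι → M →ₗ[R] N)
    (hle : ∀ i j, i ≠ j → p j ≤ LinearMap.ker (f i))
    (hdisj : ∀ i, Disjoint (p i) (LinearMap.ker (f i))) : iSupIndep p := fun i =>
  (hdisj i).mono_right (iSup₂_le fun j hji => hle i j (Ne.symm hji))

namespace Coalgebra

variable {R C : Type*} [CommSemiring R] [AddCommMonoid C] [Module R C]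

def contractLeftComul [CoalgebraStruct R C] (φ : Dual R C) : C →ₗ[R] C :=
  lift (LinearMap.lsmul R C ∘ₗ φ) ∘ₗ comul

lemma contractLeftComul_apply_of_isGrouplike [Coalgebra R C] (φ : Dual R C) {u : C}
    (hu : IsGrouplike (k := R) u) : contractLeftComul φ u = φ u • u := by
  simp [contractLeftComul, hu.1]

end Coalgebra

section SkewPrimitive

variable {k H : Type*}

lemma mem_skewPrimitive_iff [CommRing k] [Ring H] [Algebra k H] [Coalgebra k H] {g x : H} :
    x ∈ skewPrimitive k g ↔ comul (R := k) x = x ⊗ₜ[k] (1 : H) + g ⊗ₜ[k] x := by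
  simp [skewPrimitive, sub_eq_zero]

lemma contractLeftComul_apply_of_mem_skewPrimitive [CommRing k] [Ring H] [Algebra k H]
    [Coalgebra k H] (φ : Dual k H) {g x : H} (hx : x ∈ skewPrimitive k g) :
    contractLeftComul φ x = φ x • 1 + φ g • x := by
  simp [contractLeftComul, mem_skewPrimitive_iff.mp hx]

end SkewPrimitive

section Grouplike

variable {k H : Type*} [CommSemiring k] [AddCommMonoid H] [Module k H] [Coalgebra k H]

lemma isGrouplike_iff_isGroupLikeElem {g : H} : IsGrouplike (k := k) g ↔ IsGroupLikeElem k g := by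
  rw [IsGrouplike, isGroupLikeElem_iff, and_comm]

variable (k H) in
def grouplikeSpan : Submodule k H :=
  Submodule.span k {g : H | IsGrouplike (k := k) g}

end Grouplike

section Field

variable {k H : Type*} [Field k] [AddCommGroup H] [Module k H] [Coalgebra k H]

lemma linearIndepOn_isGrouplike : LinearIndepOn k id {g : H | IsGrouplike (k := k) g} := by
  simpa only [isGrouplike_iff_isGroupLikeElem] using linearIndepOn_isGroupLikeElem

variable (k) in
open scoped Classical in
noncomputable def grouplikeDelta (g : H) : Dual k H :=
  (linearIndepOn_isGrouplike.exists_dual_eqOn fun u => if u = g then 1 else 0).choose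

lemma grouplikeDelta_self {g : H} (hg : IsGrouplike (k := k) g) : grouplikeDelta k g g = 1 := by
  rw [grouplikeDelta]
  exact ((linearIndepOn_isGrouplike.exists_dual_eqOn _).choose_spec hg).trans (if_pos rfl)

lemma grouplikeDelta_of_ne {g u : H} (hu : IsGrouplike (k := k) u) (hug : u ≠ g) :
    grouplikeDelta k g u = 0 := by
  rw [grouplikeDelta]
  exact ((linearIndepOn_isGrouplike.exists_dual_eqOn _).choose_spec hu).trans (if_neg hug)

lemma grouplikeSpan_le_ker_mkQ_comp_contractLeftComul (φ : Dual k H) :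
    grouplikeSpan k H ≤ LinearMap.ker ((grouplikeSpan k H).mkQ ∘ₗ contractLeftComul φ) := by
  refine Submodule.span_le.mpr fun u hu => ?_
  simp only [SetLike.mem_coe, LinearMap.mem_ker, LinearMap.comp_apply,
    contractLeftComul_apply_of_isGrouplike φ hu, map_smul, Submodule.mkQ_apply]
  exact smul_eq_zero_of_right _ ((Submodule.Quotient.mk_eq_zero _).mpr (Submodule.subset_span hu))

lemma contractLeftComul_grouplikeDelta_of_mem_grouplikeSpan {g x : H}
    (hx : x ∈ grouplikeSpan k H) :
    contractLeftComul (grouplikeDelta k g) x = grouplikeDelta k g x • g := by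
  refine LinearMap.eqOn_span (g := (grouplikeDelta k g).smulRight g) (fun u hu => ?_) hx
  rw [contractLeftComul_apply_of_isGrouplike _ hu, LinearMap.smulRight_apply]
  obtain rfl | hug := eq_or_ne u g
  · rfl
  · rw [grouplikeDelta_of_ne hu hug, zero_smul, zero_smul]

end Field

section Bialgebra

variable {k H : Type*} [Field k] [Ring H] [Bialgebra k H]

lemma one_mem_grouplikeSpan : (1 : H) ∈ grouplikeSpan k H :=
  Submodule.subset_span (isGrouplike_iff_isGroupLikeElem.mpr IsGroupLikeElem.one)

lemma span_one_sub_grouplike_le_grouplikeSpan :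
    Submodule.span k {x : H | ∃ g : H, IsGrouplike (k := k) g ∧ x = 1 - g} ≤
      grouplikeSpan k H := by
  refine Submodule.span_le.mpr ?_
  rintro _ ⟨g, hg, rfl⟩
  exact sub_mem one_mem_grouplikeSpan (Submodule.subset_span hg)

lemma mkQ_contractLeftComul_of_mem_skewPrimitive (φ : Dual k H) {h x : H}
    (hx : x ∈ skewPrimitive k h) :
    (grouplikeSpan k H).mkQ (contractLeftComul φ x) = φ h • (grouplikeSpan k H).mkQ x := by
  rw [contractLeftComul_apply_of_mem_skewPrimitive φ hx, map_add, map_smul, map_smul,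
    Submodule.mkQ_apply, (Submodule.Quotient.mk_eq_zero _).mpr one_mem_grouplikeSpan, smul_zero,
    zero_add]

lemma skewPrimitive_inf_grouplikeSpan_le {g : H} (hg : IsGrouplike (k := k) g) :
    skewPrimitive k g ⊓ grouplikeSpan k H ≤ k ∙ (1 - g) := by
  rintro x ⟨hxL, hxW⟩
  have hx := contractLeftComul_apply_of_mem_skewPrimitive (grouplikeDelta k g) hxL
  rw [contractLeftComul_grouplikeDelta_of_mem_grouplikeSpan hxW, grouplikeDelta_self hg,
    one_smul] at hx
  refine Submodule.mem_span_singleton.mpr ⟨-grouplikeDelta k g x, ?_⟩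
  linear_combination (norm := module) hx

end Bialgebra

/-- Modulo the span of the elements `1 - g` for `g` grouplike, the skew primitive
spaces `L_g` for distinct grouplike `g` form a direct sum (are independent). -/
theorem skewPrimitive_independent_mod_span
    {k H : Type*} [Field k] [Ring H] [HopfAlgebra k H] :
    iSupIndep (fun g : {g : H // IsGrouplike (k := k) g} =>
      (skewPrimitive k (g : H)).map
        (Submodule.span k {x : H | ∃ g' : H, IsGrouplike (k := k) g' ∧
          x = 1 - g'}).mkQ) := by
  set S := Submodule.span k {x : H | ∃ g' : H, IsGrouplike (k := k) g' ∧ x = 1 - g'}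
  have hSW : S ≤ grouplikeSpan k H := span_one_sub_grouplike_le_grouplikeSpan
  let f (g : {g : H // IsGrouplike (k := k) g}) : H ⧸ S →ₗ[k] H ⧸ grouplikeSpan k H :=
    S.liftQ _ (hSW.trans <|
      grouplikeSpan_le_ker_mkQ_comp_contractLeftComul (grouplikeDelta k (g : H)))
  refine iSupIndep_of_le_ker f (fun g h hgh => ?_) (fun g => ?_)
  · rintro _ ⟨x, hx, rfl⟩
    simp [f, mkQ_contractLeftComul_of_mem_skewPrimitive _ hx,
      grouplikeDelta_of_ne h.2 (Subtype.coe_ne_coe.mpr hgh.symm)]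
  · refine Submodule.disjoint_def.mpr ?_
    rintro _ ⟨x, hx, rfl⟩ hker
    have hxW : x ∈ grouplikeSpan k H := by
      simpa [f, mkQ_contractLeftComul_of_mem_skewPrimitive _ hx, grouplikeDelta_self g.2]
        using hker
    refine (Submodule.Quotient.mk_eq_zero S).mpr (Submodule.span_mono ?_
      (skewPrimitive_inf_grouplikeSpan_le g.2 ⟨hx, hxW⟩))
    exact Set.singleton_subset_iff.mpr ⟨g, g.2, rfl⟩
end

section
/- In a character Hopf algebra, nonzero semi-invariants of distinct weights are linearly independent; consequently H is graded by the character group G* of G: H = ⊕_{χ ∈ G*} H^χ. -/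
/-- The space of semi-invariants of weight `χ : G → k` for the conjugation action of a
group `G` acting via units `u g` of the algebra `H`:
`{h | g⁻¹ h g = χ(g) h for all g}`. -/
def weightSpace {k H : Type*} [Field k] [Ring H] [Algebra k H] {G : Type*}
    [CommGroup G] (u : G →* Hˣ) (χ : G → k) : Submodule k H where
  carrier := {h : H | ∀ g : G, (↑(u g)⁻¹ : H) * h * (u g : H) = χ g • h}
  add_mem' := by
    intro a b ha hb g
    rw [mul_add, add_mul, ha g, hb g, smul_add]
  zero_mem' := by
    intro g; simp
  smul_mem' := by
    intro c a ha g
    rw [mul_smul_comm, smul_mul_assoc, ha g, smul_comm]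

section Aux

variable {k H : Type*} [Field k] [Ring H] [Algebra k H] {G : Type*} [CommGroup G]

/-- Conjugation by `u g` as a linear endomorphism of `H`. -/
def conjEnd (u : G →* Hˣ) (g : G) : Module.End k H where
  toFun h := (↑(u g)⁻¹ : H) * h * (u g : H)
  map_add' a b := by simp [mul_add, add_mul]
  map_smul' c a := by simp [mul_smul_comm, smul_mul_assoc]

lemma conjEnd_comm (u : G →* Hˣ) (g g' : G) :
    Commute (conjEnd (k := k) u g) (conjEnd u g') := by
  have key : ∀ (a b : G) (h : H), conjEnd (k := k) u a ((conjEnd (k := k) u b) h) =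
      (↑(u (b * a))⁻¹ : H) * h * (u (b * a) : H) := by
    intro a b h
    simp only [conjEnd, LinearMap.coe_mk, AddHom.coe_mk, map_mul,
      Units.val_mul, mul_inv_rev]
    noncomm_ring
  ext h
  simp only [Module.End.mul_apply]
  rw [key, key, mul_comm g g']

lemma weightSpace_le_iInf_maxGenEigenspace (u : G →* Hˣ) (χ : G → k) :
    weightSpace u χ ≤ ⨅ g, (conjEnd (k := k) u g).maxGenEigenspace (χ g) := by
  intro h hh
  rw [Submodule.mem_iInf]
  intro g
  rw [Module.End.mem_maxGenEigenspace]
  refine ⟨1, ?_⟩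
  simp only [pow_one, LinearMap.sub_apply, LinearMap.smul_apply, Module.End.one_apply]
  rw [sub_eq_zero]
  exact hh g

end Aux

/-- In a character Hopf algebra (here: an algebra with an abelian group `G` acting by
conjugation via units), nonzero semi-invariants of pairwise distinct weights are
linearly independent; consequently the weight spaces `H^χ`, `χ ∈ G*`, are independent
(so their sum is a direct sum, giving the grading `H = ⊕_χ H^χ`). -/
theorem semiInvariants_distinct_weights_linearIndependent
    {k H : Type*} [Field k] [Ring H] [Algebra k H] {G : Type*} [CommGroup G]
    (u : G →* Hˣ) :
    (∀ {ι : Type} (h : ι → H) (χ : ι → (G →* kˣ)),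
      (∀ i, h i ≠ 0) →
      (∀ i, h i ∈ weightSpace u (fun g => (χ i g : k))) →
      (∀ i j, i ≠ j → χ i ≠ χ j) →
      LinearIndependent k h) ∧
    iSupIndep (fun χ : G →* kˣ => weightSpace u (fun g => (χ g : k))) := by
  have hindep0 : iSupIndep fun χ : G → k =>
      ⨅ g, (conjEnd (k := k) u g).maxGenEigenspace (χ g) :=
    Module.End.independent_iInf_maxGenEigenspace_of_forall_mapsTo _
      (fun i j φ => Module.End.mapsTo_maxGenEigenspace_of_comm (conjEnd_comm u j i) φ)
  have hinj : Function.Injective (fun χ : G →* kˣ => (fun g => (χ g : k))) := by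
    intro χ₁ χ₂ hχ
    ext g
    exact congrFun hχ g
  have hindep : iSupIndep (fun χ : G →* kˣ => weightSpace u (fun g => (χ g : k))) :=
    (hindep0.comp hinj).mono fun χ =>
      weightSpace_le_iInf_maxGenEigenspace u (fun g => (χ g : k))
  refine ⟨?_, hindep⟩
  intro ι h χ hne hmem hdist
  have hχinj : Function.Injective χ := by
    intro i j hij
    by_contra hne'
    exact hdist i j hne' hij
  exact (hindep.comp hχinj).linearIndependent _ hmem hne
end

section
/- Let x be a g-primitive semi-invariant in a Hopf algebra with p = χ^x(g). If p is a primitive m-th root of unity, then x^m is a g^m-primitive element; moreover x^m is a semi-invariant of weight (χ^x)^m. -/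
open Coalgebra TensorProduct
namespace QBinomAux

variable {k : Type*} [Field k]

/-- Gaussian binomial coefficients via the recursion `c (n+1) (j+1) = c n j + q^(j+1) * c n (j+1)`. -/
def gb (q : k) : ℕ → ℕ → k
  | 0, 0 => 1
  | 0, _+1 => 0
  | n+1, 0 => gb q n 0
  | n+1, j+1 => gb q n j + q^(j+1) * gb q n (j+1)

lemma gb_succ_zero (q : k) (n : ℕ) : gb q (n+1) 0 = gb q n 0 := rfl

lemma gb_succ_succ (q : k) (n j : ℕ) :
    gb q (n+1) (j+1) = gb q n j + q^(j+1) * gb q n (j+1) := rfl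

lemma gb_zero_right (q : k) : ∀ n, gb q n 0 = 1
  | 0 => rfl
  | n+1 => gb_zero_right q n

lemma gb_of_gt (q : k) : ∀ n j, n < j → gb q n j = 0
  | 0, _+1, _ => rfl
  | n+1, j+1, h => by
      rw [gb_succ_succ, gb_of_gt q n j (by omega), gb_of_gt q n (j+1) (by omega)]
      ring

lemma gb_diag (q : k) : ∀ n, gb q n n = 1
  | 0 => rfl
  | n+1 => by
      rw [gb_succ_succ, gb_diag q n, gb_of_gt q n (n+1) (by omega)]
      ring

/-- The second Pascal-type recursion. -/
lemma gb_pascal2 (q : k) : ∀ n : ℕ, ∀ j : ℕ, j ≤ n →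
    gb q (n+1) (j+1) = q^(n-j) * gb q n j + gb q n (j+1) := by
  intro n
  induction n with
  | zero =>
    intro j hj
    interval_cases j
    simp [gb_succ_succ, gb]
  | succ n ih =>
    intro j hj
    match j with
    | 0 =>
      have A := ih 0 (Nat.zero_le n)
      have B := gb_succ_succ q n 0
      rw [gb_zero_right, Nat.sub_zero] at A
      rw [gb_zero_right] at B
      rw [gb_succ_succ, gb_succ_zero, gb_zero_right, Nat.sub_zero]
      linear_combination q * A - B
    | i+1 =>
      rcases Nat.lt_or_ge i n with hi | hi
      · have hd : n - i = (n - (i+1)) + 1 := by omega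
        have A1 := ih i (by omega)
        have A2 := ih (i+1) (by omega)
        have B1 := gb_succ_succ q n i
        have B2 := gb_succ_succ q n (i+1)
        rw [hd] at A1
        rw [gb_succ_succ, show n + 1 - (i + 1) = n - i from by omega, hd]
        linear_combination A1 + q ^ (i+2) * A2 - q ^ ((n - (i+1)) + 1) * B1 - B2
      · have hin : i = n := by omega
        subst hin
        rw [gb_succ_succ, ih i le_rfl, gb_of_gt q i (i+1) (by omega),
          gb_of_gt q (i+1) (i+2) (by omega), Nat.sub_self,
          show i + 1 - (i + 1) = 0 from by omega]
        ring

/-- The combined identity at level `n`. -/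
lemma gb_combined (q : k) (n j : ℕ) (h : j ≤ n) :
    (1 - q^(n-j)) * gb q n j = (1 - q^(j+1)) * gb q n (j+1) := by
  have h2 := gb_pascal2 q n j h
  rw [gb_succ_succ] at h2
  linear_combination h2

lemma gb_root_zero {q : k} {m : ℕ} (hq : q ^ m = 1)
    (hq' : ∀ j : ℕ, 0 < j → j < m → q ^ j ≠ 1) :
    ∀ j, 0 < j → j < m → gb q m j = 0 := by
  intro j
  induction j with
  | zero => omega
  | succ i ih =>
    intro _ hlt
    have key := gb_combined q m i (by omega)
    have hne : (1 : k) - q^(i+1) ≠ 0 := by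
      intro h
      exact hq' (i+1) (by omega) hlt (by linear_combination -h)
    have hz : (1 - q^(m-i)) * gb q m i = 0 := by
      rcases Nat.eq_zero_or_pos i with hi | hi
      · subst hi
        rw [gb_zero_right, Nat.sub_zero, hq]
        ring
      · rw [ih hi (by omega)]
        ring
    rw [hz] at key
    rcases mul_eq_zero.mp key.symm with h | h
    · exact absurd h hne
    · exact h

variable {R : Type*} [Ring R] [Algebra k R]

lemma mul_pow_q {q : k} {a b : R} (hab : a * b = q • (b * a)) :
    ∀ j : ℕ, a * b ^ j = q ^ j • (b ^ j * a)
  | 0 => by simp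
  | j+1 => by
      rw [pow_succ', ← mul_assoc, hab, smul_mul_assoc, mul_assoc, mul_pow_q hab j,
        mul_smul_comm, smul_smul, ← mul_assoc, ← pow_succ', ← pow_succ']

theorem qbinom_pow {q : k} {a b : R} (hab : a * b = q • (b * a)) (n : ℕ) :
    (a + b) ^ n = ∑ j ∈ Finset.range (n+1), gb q n j • (b ^ j * a ^ (n - j)) := by
  induction n with
  | zero => simp [gb]
  | succ n ih =>
    rw [pow_succ', ih, Finset.mul_sum]
    have expand : ∀ j ∈ Finset.range (n+1),
        (a + b) * (gb q n j • (b ^ j * a ^ (n - j))) =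
          (gb q n j * q ^ j) • (b ^ j * a ^ (n + 1 - j)) +
            gb q n j • (b ^ (j+1) * a ^ (n - j)) := by
      intro j hj
      rw [Finset.mem_range] at hj
      have e : n + 1 - j = (n - j) + 1 := by omega
      rw [add_mul, mul_smul_comm, mul_smul_comm, ← mul_assoc a, mul_pow_q hab j,
        smul_mul_assoc, smul_smul, e, pow_succ', ← mul_assoc b, ← pow_succ',
        mul_assoc (b ^ j)]
    rw [Finset.sum_congr rfl expand, Finset.sum_add_distrib]
    rw [Finset.sum_range_succ' (fun j => gb q (n+1) j • (b ^ j * a ^ (n + 1 - j))) (n+1)]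
    have Tterm : ∀ j ∈ Finset.range (n+1),
        gb q (n+1) (j+1) • (b ^ (j+1) * a ^ (n + 1 - (j+1))) =
          gb q n j • (b ^ (j+1) * a ^ (n - j)) +
            (gb q n (j+1) * q ^ (j+1)) • (b ^ (j+1) * a ^ (n - j)) := by
      intro j hj
      rw [gb_succ_succ, Nat.succ_sub_succ, add_smul, mul_comm (q ^ (j+1))]
    rw [Finset.sum_congr rfl Tterm, Finset.sum_add_distrib]
    rw [Finset.sum_range_succ
      (fun j => (gb q n (j+1) * q ^ (j+1)) • (b ^ (j+1) * a ^ (n - j))) n]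
    rw [Finset.sum_range_succ' (fun j => (gb q n j * q ^ j) • (b ^ j * a ^ (n + 1 - j))) n]
    have fix : ∀ x ∈ Finset.range n,
        (gb q n (x+1) * q ^ (x+1)) • (b ^ (x+1) * a ^ (n + 1 - (x+1))) =
          (gb q n (x+1) * q ^ (x+1)) • (b ^ (x+1) * a ^ (n - x)) := by
      intro x hx
      rw [Nat.succ_sub_succ]
    rw [Finset.sum_congr rfl fix, gb_of_gt q n (n+1) (by omega), gb_succ_zero,
      gb_zero_right]
    simp only [zero_mul, zero_smul, add_zero, pow_zero, mul_one, one_mul, one_smul]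
    abel

theorem qbinom_prim {q : k} {a b : R} (hab : a * b = q • (b * a)) {m : ℕ} (hm : 1 ≤ m)
    (hq : q ^ m = 1) (hq' : ∀ j : ℕ, 0 < j → j < m → q ^ j ≠ 1) :
    (a + b) ^ m = a ^ m + b ^ m := by
  obtain ⟨m', rfl⟩ : ∃ m', m = m' + 1 := ⟨m - 1, by omega⟩
  rw [qbinom_pow hab (m'+1), Finset.sum_range_succ, Finset.sum_range_succ']
  have hz : ∀ j ∈ Finset.range m',
      gb q (m'+1) (j+1) • (b ^ (j+1) * a ^ (m' + 1 - (j+1))) = 0 := by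
    intro j hj
    rw [Finset.mem_range] at hj
    rw [gb_root_zero hq hq' (j+1) (by omega) (by omega), zero_smul]
  rw [Finset.sum_eq_zero hz, gb_diag, gb_zero_right]
  simp [add_comm]

end QBinomAux

/-- If `x` is a `g`-primitive semi-invariant with `p = χˣ(g)` a primitive `m`-th root
of unity, then `x^m` is `g^m`-primitive and a semi-invariant of weight `(χˣ)^m`. -/
theorem pow_primitive_root_skewPrimitive {k H : Type*} [Field k] [Ring H]
    [Bialgebra k H] {G : Type*} [CommGroup G] (u : G →* Hˣ) (g₀ : G)
    (x : H) (χ : G → k) (p : k) (m : ℕ) (hm : 1 ≤ m)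
    (hg : comul (R := k) ((u g₀ : Hˣ) : H) = ((u g₀ : Hˣ) : H) ⊗ₜ[k] ((u g₀ : Hˣ) : H))
    (hx : comul (R := k) x = x ⊗ₜ[k] 1 + ((u g₀ : Hˣ) : H) ⊗ₜ[k] x)
    (hsemi : ∀ h : G, (↑(u h)⁻¹ : H) * x * (u h : H) = χ h • x)
    (hpdef : p = χ g₀)
    (hproot : p ^ m = 1) (hproot' : ∀ j : ℕ, 0 < j → j < m → p ^ j ≠ 1) :
    comul (R := k) (x ^ m) =
        (x ^ m) ⊗ₜ[k] 1 + (((u g₀ : Hˣ) : H) ^ m) ⊗ₜ[k] (x ^ m) ∧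
      ∀ h : G, (↑(u h)⁻¹ : H) * (x ^ m) * (u h : H) = (χ h) ^ m • (x ^ m) := by
  constructor
  · -- comultiplication of `x ^ m`
    set g : H := ((u g₀ : Hˣ) : H) with hgdef
    -- the commutation relation in `H ⊗ H`
    have hxg : x * g = p • (g * x) := by
      have h1 := congrArg (fun y => g * y) (hsemi g₀)
      simp only [mul_smul_comm] at h1
      rw [← mul_assoc, ← mul_assoc, ← hgdef] at h1
      rw [show g * (↑(u g₀)⁻¹ : H) = 1 from (u g₀).mul_inv, one_mul, ← hpdef] at h1
      exact h1
    have hab : (x ⊗ₜ[k] (1:H)) * (g ⊗ₜ[k] x) = p • ((g ⊗ₜ[k] x) * (x ⊗ₜ[k] (1:H))) := by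
      rw [Algebra.TensorProduct.tmul_mul_tmul, Algebra.TensorProduct.tmul_mul_tmul,
        one_mul, mul_one, hxg, TensorProduct.smul_tmul']
    have := QBinomAux.qbinom_prim (k := k) hab hm hproot hproot'
    rw [Bialgebra.comul_pow, hx, this, Algebra.TensorProduct.tmul_pow,
      Algebra.TensorProduct.tmul_pow, one_pow]
  · -- semi-invariance of `x ^ m`
    intro h
    have conj : ∀ n : ℕ, ((↑(u h)⁻¹ : H) * x * (u h : H)) ^ n =
        (↑(u h)⁻¹ : H) * x ^ n * (u h : H) := by
      intro n
      induction n with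
      | zero => simp [show ((u h : H)) * (↑(u h)⁻¹ : H) * (u h : H) = (u h : H) by
          rw [(u h).mul_inv, one_mul]]
      | succ n ih =>
        rw [pow_succ, ih, pow_succ]
        calc (↑(u h)⁻¹ : H) * x ^ n * ↑(u h) * ((↑(u h)⁻¹ : H) * x * ↑(u h))
            = (↑(u h)⁻¹ : H) * x ^ n * (↑(u h) * (↑(u h)⁻¹ : H)) * x * ↑(u h) := by
              simp only [mul_assoc]
          _ = (↑(u h)⁻¹ : H) * (x ^ n * x) * ↑(u h) := by
              rw [(u h).mul_inv, mul_one]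
              simp only [mul_assoc]
    rw [← conj m, hsemi h, smul_pow]
end

section
/- Let H be a Hopf algebra over a field of characteristic l > 0, g grouplike, and x a g-primitive semi-invariant with χ^x(g) = 1. Then x^l is a g^l-primitive element. -/
/-!
Since `Δ` is multiplicative, `Δ(x ^ l) = (x ⊗ 1 + g ⊗ x) ^ l`. The two summands commute because
`x` and `g` do, and `l = 0` in `H ⊗ H`, so the binomial expansion collapses to
`x ^ l ⊗ 1 + g ^ l ⊗ x ^ l`.
-/

open Coalgebra TensorProduct

-- `A` may be the zero ring, so it need not have `CharP A p`; only `(p : A) = 0` is available.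
theorem Commute.add_pow_char_of_algebra {R A : Type*} [CommSemiring R] [Semiring A] [Algebra R A]
    {p : ℕ} (hp : p.Prime) [CharP R p] {a b : A} (h : Commute a b) :
    (a + b) ^ p = a ^ p + b ^ p := by
  have hp0 : (p : A) = 0 := by
    rw [← map_natCast (algebraMap R A), CharP.cast_eq_zero, map_zero]
  obtain ⟨r, hr⟩ := h.exists_add_pow_prime_eq hp
  rw [hr, hp0, zero_mul, zero_mul, zero_mul, add_zero]

theorem Bialgebra.comul_pow_char_of_skewPrimitive {R H : Type*} [CommSemiring R] [Semiring H]
    [Bialgebra R H] {p : ℕ} (hp : p.Prime) [CharP R p] {g x : H}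
    (hx : comul (R := R) x = x ⊗ₜ[R] 1 + g ⊗ₜ[R] x) (hxg : Commute x g) :
    comul (R := R) (x ^ p) = (x ^ p) ⊗ₜ[R] 1 + (g ^ p) ⊗ₜ[R] (x ^ p) := by
  have hsummands : Commute (x ⊗ₜ[R] (1 : H)) (g ⊗ₜ[R] x) := hxg.tmul (Commute.one_left x)
  rw [Bialgebra.comul_pow, hx, hsummands.add_pow_char_of_algebra (R := R) hp,
    Algebra.TensorProduct.tmul_pow, Algebra.TensorProduct.tmul_pow, one_pow]

theorem pow_char_skewPrimitive_general {k H : Type*} [Field k] [Ring H] [Bialgebra k H]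
    (l : ℕ) (hl : l.Prime) [CharP k l] (g x : H)
    (hx : comul (R := k) x = x ⊗ₜ[k] 1 + g ⊗ₜ[k] x)
    (hcomm : x * g = g * x) :
    comul (R := k) (x ^ l) = (x ^ l) ⊗ₜ[k] 1 + (g ^ l) ⊗ₜ[k] (x ^ l) :=
  Bialgebra.comul_pow_char_of_skewPrimitive hl hx hcomm

/-- Over a field of prime characteristic `l`, if `x` is `g`-primitive and commutes
with the grouplike element `g` (i.e. `χˣ(g) = 1`), then `x^l` is `g^l`-primitive. -/
theorem pow_char_skewPrimitive {k H : Type*} [Field k] [Ring H] [Bialgebra k H]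
    (l : ℕ) (hl : l.Prime) [CharP k l] (g x : H)
    (hg : comul (R := k) g = g ⊗ₜ[k] g ∧ counit (R := k) g = (1 : k))
    (hx : comul (R := k) x = x ⊗ₜ[k] 1 + g ⊗ₜ[k] x)
    (hcomm : x * g = g * x) :
    comul (R := k) (x ^ l) = (x ^ l) ⊗ₜ[k] 1 + (g ^ l) ⊗ₜ[k] (x ^ l) :=
  pow_char_skewPrimitive_general l hl g x hx hcomm
end

section
/- Let x, y be skew primitive semi-invariants in a Hopf algebra with p12 = χ^x(g_y), p21 = χ^y(g_x), p22 = χ^y(g_y), and suppose p12·p21 = p22^{1-n} for some n ≥ 1. Then the iterated skew commutator W = [⋯[[x,y]_{p12}, y]_{p12 p22}, ⋯, y]_{p12 p22^{n-1}} is a (g_x g_y^n)-primitive element. -/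
/-!
Write `W m` for the iterated skew commutator of length `m` and `q = p₂₂`, `P = p₁₂ p₂₁`.
By induction on `m`,
`Δ(W m) = W m ⊗ 1 + ∑_{a + b = m} c(a, b) • (g_x g_yᵃ yᵇ ⊗ W a)`:
`Δ(W (m+1))` is the skew commutator of `Δ(W m)` with `Δ y = y ⊗ 1 + g_y ⊗ y`, and the
monomial term at `(a, b)` contributes to the terms at `(a, b + 1)` and `(a + 1, b)`.
The coefficients are `c(a, b) = [a + b choose a]_q ∏_{j < b} (1 - P qᵃ⁺ʲ)`; their recursion
is the combination of the two q-Pascal rules. If `P qⁿ⁻¹ = 1`, the factor `j = b - 1` kills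
every term with `b ≥ 1` on the antidiagonal `a + b = n`, leaving `g_x g_yⁿ ⊗ W n`.
-/

open Coalgebra TensorProduct

/-- The iterated skew commutator `[⋯[[x,y]_{p₁₂}, y]_{p₁₂p₂₂}, ⋯, y]_{p₁₂p₂₂^{n-1}}`. -/
def iterSkewComm {k H : Type*} [Field k] [Ring H] [Algebra k H]
    (p12 p22 : k) (x y : H) : ℕ → H
  | 0 => x
  | n + 1 => iterSkewComm p12 p22 x y n * y -
      (p12 * p22 ^ n) • (y * iterSkewComm p12 p22 x y n)

open Finset

section GaussBinom

variable {R : Type*} [CommRing R]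

/-- The Gaussian binomial coefficient `[a + b choose a]_q`, indexed by the two parts `a` and `b`. -/
def gaussBinom (q : R) : ℕ → ℕ → R
  | 0, _ => 1
  | _ + 1, 0 => 1
  | a + 1, b + 1 => gaussBinom q (a + 1) b + q ^ (b + 1) * gaussBinom q a (b + 1)

@[simp] lemma gaussBinom_zero_left (q : R) (b : ℕ) : gaussBinom q 0 b = 1 := by
  rw [gaussBinom]

@[simp] lemma gaussBinom_zero_right (q : R) (a : ℕ) : gaussBinom q a 0 = 1 := by
  cases a <;> rw [gaussBinom]

lemma gaussBinom_succ_succ (q : R) (a b : ℕ) :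
    gaussBinom q (a + 1) (b + 1) =
      gaussBinom q (a + 1) b + q ^ (b + 1) * gaussBinom q a (b + 1) := by
  rw [gaussBinom]

lemma one_sub_pow_mul_gaussBinom_succ (q : R) : ∀ a b : ℕ,
    (1 - q ^ (a + 1)) * gaussBinom q (a + 1) b = (1 - q ^ (b + 1)) * gaussBinom q a (b + 1)
  | 0, 0 => by simp
  | 0, b + 1 => by
    have ih := one_sub_pow_mul_gaussBinom_succ q 0 b
    simp only [gaussBinom_succ_succ, gaussBinom_zero_left] at ih ⊢
    linear_combination ih
  | a + 1, 0 => by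
    have ih := one_sub_pow_mul_gaussBinom_succ q a 0
    simp only [gaussBinom_succ_succ, gaussBinom_zero_right, zero_add] at ih ⊢
    linear_combination q * ih
  | a + 1, b + 1 => by
    rw [gaussBinom_succ_succ q (a + 1), gaussBinom_succ_succ q a (b + 1)]
    linear_combination one_sub_pow_mul_gaussBinom_succ q (a + 1) b +
      q ^ (b + 2) * one_sub_pow_mul_gaussBinom_succ q a (b + 1)

lemma gaussBinom_succ_succ' (q : R) (a b : ℕ) :
    gaussBinom q (a + 1) (b + 1) =
      gaussBinom q a (b + 1) + q ^ (a + 1) * gaussBinom q (a + 1) b := by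
  linear_combination gaussBinom_succ_succ q a b + one_sub_pow_mul_gaussBinom_succ q a b

def iterSkewCommCoeff (q P : R) (a b : ℕ) : R :=
  gaussBinom q a b * ∏ j ∈ range b, (1 - P * q ^ (a + j))

@[simp] lemma iterSkewCommCoeff_zero_right (q P : R) (a : ℕ) : iterSkewCommCoeff q P a 0 = 1 := by
  simp [iterSkewCommCoeff]

lemma iterSkewCommCoeff_zero_succ (q P : R) (b : ℕ) :
    iterSkewCommCoeff q P 0 (b + 1) = iterSkewCommCoeff q P 0 b * (1 - P * q ^ b) := by
  simp [iterSkewCommCoeff, prod_range_succ]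

lemma iterSkewCommCoeff_succ_succ (q P : R) (a b : ℕ) :
    iterSkewCommCoeff q P (a + 1) (b + 1) =
      iterSkewCommCoeff q P (a + 1) b * (1 - P * q ^ (2 * (a + 1) + b)) +
        iterSkewCommCoeff q P a (b + 1) * q ^ (b + 1) := by
  have hshift : ∏ j ∈ range (b + 1), (1 - P * q ^ (a + j)) =
      (∏ j ∈ range b, (1 - P * q ^ (a + 1 + j))) * (1 - P * q ^ a) := by
    simp only [prod_range_succ', add_zero, add_right_comm a 1, add_assoc]
  simp only [iterSkewCommCoeff, hshift, prod_range_succ]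
  linear_combination (∏ j ∈ range b, (1 - P * q ^ (a + 1 + j))) *
    (gaussBinom_succ_succ q a b - P * q ^ (a + 1 + b) * gaussBinom_succ_succ' q a b)

lemma iterSkewCommCoeff_eq_zero {q P : R} {a b : ℕ} (h : P * q ^ (a + b) = 1) :
    iterSkewCommCoeff q P a (b + 1) = 0 :=
  mul_eq_zero_of_right _ (prod_eq_zero (mem_range.2 b.lt_add_one) (by rw [h, sub_self]))

lemma sum_antidiagonal_succ_iterSkewCommCoeff_smul {M : Type*} [AddCommGroup M] [Module R M]
    (q P : R) (f : ℕ → ℕ → M) (m : ℕ) :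
    ∑ p ∈ antidiagonal (m + 1), iterSkewCommCoeff q P p.1 p.2 • f p.1 p.2 =
      ∑ p ∈ antidiagonal m, iterSkewCommCoeff q P p.1 p.2 •
        ((1 - P * q ^ (2 * p.1 + p.2)) • f p.1 (p.2 + 1) + q ^ p.2 • f (p.1 + 1) p.2) := by
  cases m with
  | zero => simp [Nat.sum_antidiagonal_succ, iterSkewCommCoeff_zero_succ, add_comm]
  | succ m =>
    simp only [smul_add, sum_add_distrib]
    conv_lhs => rw [Nat.sum_antidiagonal_succ', Nat.sum_antidiagonal_succ]
    conv_rhs => rw [Nat.sum_antidiagonal_succ, Nat.sum_antidiagonal_succ']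
    simp only [iterSkewCommCoeff_zero_succ, iterSkewCommCoeff_succ_succ,
      iterSkewCommCoeff_zero_right, add_smul, mul_smul, sum_add_distrib, mul_zero, zero_add,
      pow_zero, one_smul]
    abel

end GaussBinom

section SkewComm

variable {R A : Type*} [CommRing R] [Ring A] [Algebra R A]

def skewComm (c : R) (v : A) : A →ₗ[R] A :=
  LinearMap.mulRight R v - c • LinearMap.mulLeft R v

@[simp] lemma skewComm_apply (c : R) (v u : A) : skewComm c v u = u * v - c • (v * u) := rfl

lemma AlgHom.map_skewComm {B : Type*} [Ring B] [Algebra R B] (f : A →ₐ[R] B) (c : R) (v u : A) :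
    f (skewComm c v u) = skewComm c (f v) (f u) := by
  simp

variable {a b : A} {c : R}

lemma pow_mul_eq_smul_mul_pow (h : a * b = c • (b * a)) (n : ℕ) :
    a ^ n * b = c ^ n • (b * a ^ n) := by
  induction n with
  | zero => simp
  | succ n ih =>
    rw [pow_succ, mul_assoc, h, mul_smul_comm, ← mul_assoc, ih, smul_mul_assoc, smul_smul,
      mul_assoc, ← pow_succ, ← pow_succ']

lemma mul_pow_eq_smul_pow_mul (h : a * b = c • (b * a)) (n : ℕ) :
    a * b ^ n = c ^ n • (b ^ n * a) := by
  induction n with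
  | zero => simp
  | succ n ih =>
    rw [pow_succ, ← mul_assoc, ih, smul_mul_assoc, mul_assoc, h, mul_smul_comm, smul_smul,
      ← mul_assoc, ← pow_succ, pow_succ]

lemma skewComm_mul_eq_smul_mul {u v g : A} {α β : R} (hu : u * g = α • (g * u))
    (hv : v * g = β • (g * v)) (c : R) :
    skewComm c v u * g = (α * β) • (g * skewComm c v u) := by
  simp only [skewComm_apply, sub_mul, mul_sub, smul_mul_assoc, mul_assoc, hv, mul_smul_comm]
  simp only [← mul_assoc, hu, hv, smul_mul_assoc, mul_smul_comm]
  module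

section Tensor

variable {gx gy y : A} {p21 p22 : R}

lemma skewComm_tmul_one_of_mul_eq_smul {u : A} {c : R} (hu : u * gy = c • (gy * u)) :
    skewComm c (y ⊗ₜ[R] 1 + gy ⊗ₜ[R] y) (u ⊗ₜ[R] (1 : A)) =
      skewComm c y u ⊗ₜ[R] 1 := by
  simp only [skewComm_apply, mul_add, add_mul, Algebra.TensorProduct.tmul_mul_tmul, mul_one,
    one_mul, hu, sub_tmul, smul_add, ← smul_tmul']
  abel

lemma skewComm_monomial_tmul (habelian : gx * gy = gy * gx) (hygx : y * gx = p21 • (gx * y))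
    (hygy : y * gy = p22 • (gy * y)) (u : A) (c : R) (a b : ℕ) :
    skewComm (c * p22 ^ b) (y ⊗ₜ[R] 1 + gy ⊗ₜ[R] y) ((gx * gy ^ a * y ^ b) ⊗ₜ[R] u) =
      (1 - c * p21 * p22 ^ (a + b)) • ((gx * gy ^ a * y ^ (b + 1)) ⊗ₜ[R] u) +
        p22 ^ b • ((gx * gy ^ (a + 1) * y ^ b) ⊗ₜ[R] skewComm c y u) := by
  have hmul_y : gx * gy ^ a * y ^ b * y = gx * gy ^ a * y ^ (b + 1) := by
    rw [mul_assoc _ (y ^ b), ← pow_succ]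
  have hmul_gy : gx * gy ^ a * y ^ b * gy = p22 ^ b • (gx * gy ^ (a + 1) * y ^ b) := by
    rw [mul_assoc _ (y ^ b), pow_mul_eq_smul_mul_pow hygy, mul_smul_comm, ← mul_assoc,
      mul_assoc gx, ← pow_succ]
  have hy_mul : y * (gx * gy ^ a * y ^ b) = (p21 * p22 ^ a) • (gx * gy ^ a * y ^ (b + 1)) := by
    rw [← mul_assoc, ← mul_assoc, hygx, smul_mul_assoc, smul_mul_assoc, mul_assoc gx,
      mul_pow_eq_smul_pow_mul hygy, mul_smul_comm, smul_mul_assoc, smul_smul, mul_assoc,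
      mul_assoc, ← pow_succ', ← mul_assoc]
  have hgy_mul : gy * (gx * gy ^ a * y ^ b) = gx * gy ^ (a + 1) * y ^ b := by
    rw [← mul_assoc, ← mul_assoc, ← habelian, mul_assoc gx, ← pow_succ']
  simp only [skewComm_apply, mul_add, add_mul, Algebra.TensorProduct.tmul_mul_tmul, mul_one,
    one_mul, hmul_y, hmul_gy, hy_mul, hgy_mul, tmul_sub, tmul_smul, ← smul_tmul', smul_add,
    smul_sub]
  module

end Tensor

end SkewComm

section IterSkewComm

variable {k H : Type*} [Field k] [Ring H] [Algebra k H] {gy x y : H} {p12 p22 : k}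

lemma iterSkewComm_succ (m : ℕ) :
    iterSkewComm p12 p22 x y (m + 1) = skewComm (p12 * p22 ^ m) y (iterSkewComm p12 p22 x y m) :=
  rfl

lemma iterSkewComm_mul_eq_smul_mul (hxgy : x * gy = p12 • (gy * x))
    (hygy : y * gy = p22 • (gy * y)) (m : ℕ) :
    iterSkewComm p12 p22 x y m * gy = (p12 * p22 ^ m) • (gy * iterSkewComm p12 p22 x y m) := by
  induction m with
  | zero => simpa [iterSkewComm] using hxgy
  | succ m ih => rw [iterSkewComm_succ, skewComm_mul_eq_smul_mul ih hygy, pow_succ, mul_assoc]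

end IterSkewComm

theorem comul_iterSkewComm {k H : Type*} [Field k] [Ring H] [Bialgebra k H]
    {gx gy x y : H} {p12 p21 p22 : k} (habelian : gx * gy = gy * gx)
    (hx : comul (R := k) x = x ⊗ₜ[k] 1 + gx ⊗ₜ[k] x)
    (hy : comul (R := k) y = y ⊗ₜ[k] 1 + gy ⊗ₜ[k] y)
    (hxgy : x * gy = p12 • (gy * x)) (hygx : y * gx = p21 • (gx * y))
    (hygy : y * gy = p22 • (gy * y)) (m : ℕ) :
    comul (R := k) (iterSkewComm p12 p22 x y m) = iterSkewComm p12 p22 x y m ⊗ₜ[k] 1 +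
      ∑ p ∈ antidiagonal m, iterSkewCommCoeff p22 (p12 * p21) p.1 p.2 •
        ((gx * gy ^ p.1 * y ^ p.2) ⊗ₜ[k] iterSkewComm p12 p22 x y p.1) := by
  induction m with
  | zero => simp [iterSkewComm, hx]
  | succ m ih =>
    have hcomul : comul (R := k) (iterSkewComm p12 p22 x y (m + 1)) =
        skewComm (p12 * p22 ^ m) (comul (R := k) y) (comul (R := k) (iterSkewComm p12 p22 x y m)) :=
      (Bialgebra.comulAlgHom k H).map_skewComm _ _ _
    rw [hcomul, ih, hy, map_add, map_sum, skewComm_tmul_one_of_mul_eq_smul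
      (iterSkewComm_mul_eq_smul_mul hxgy hygy m), ← iterSkewComm_succ,
      sum_antidiagonal_succ_iterSkewCommCoeff_smul _ _
        (fun a b => (gx * gy ^ a * y ^ b) ⊗ₜ[k] iterSkewComm p12 p22 x y a)]
    congr 1
    refine sum_congr rfl fun p hp => ?_
    rw [HasAntidiagonal.mem_antidiagonal] at hp
    rw [map_smul, ← hp, pow_add, ← mul_assoc, skewComm_monomial_tmul habelian hygx hygy,
      ← iterSkewComm_succ,
      show p12 * p22 ^ p.1 * p21 * p22 ^ (p.1 + p.2) = p12 * p21 * p22 ^ (2 * p.1 + p.2) by ring]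

theorem iterSkewComm_skewPrimitive_general {k H : Type*} [Field k] [Ring H] [Bialgebra k H]
    (gx gy x y : H) (p12 p21 p22 : k) (n : ℕ)
    (habelian : gx * gy = gy * gx)
    (hx : comul (R := k) x = x ⊗ₜ[k] 1 + gx ⊗ₜ[k] x)
    (hy : comul (R := k) y = y ⊗ₜ[k] 1 + gy ⊗ₜ[k] y)
    (hxgy : x * gy = p12 • (gy * x))
    (hygx : y * gx = p21 • (gx * y))
    (hygy : y * gy = p22 • (gy * y))
    (hp : p12 * p21 * p22 ^ (n - 1) = 1) :
    comul (R := k) (iterSkewComm p12 p22 x y n) =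
      (iterSkewComm p12 p22 x y n) ⊗ₜ[k] 1 +
        (gx * gy ^ n) ⊗ₜ[k] (iterSkewComm p12 p22 x y n) := by
  rw [comul_iterSkewComm habelian hx hy hxgy hygx hygy, add_right_inj,
    sum_eq_single_of_mem (n, 0) (by simp)]
  · simp
  rintro ⟨a, _ | b⟩ hab hne
  · simp_all
  · rw [HasAntidiagonal.mem_antidiagonal] at hab
    subst hab
    rw [iterSkewCommCoeff_eq_zero (by simpa using hp), zero_smul]

/-- If `x` is `g_x`-primitive, `y` is `g_y`-primitive, with commutation constants
`p₁₂ = χˣ(g_y)`, `p₂₁ = χʸ(g_x)`, `p₂₂ = χʸ(g_y)` satisfying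
`p₁₂ p₂₁ = p₂₂^{1-n}` (i.e. `p₁₂ p₂₁ p₂₂^{n-1} = 1`), then the iterated skew
commutator `W` of length `n` is `(g_x g_yⁿ)`-primitive. -/
theorem iterSkewComm_skewPrimitive {k H : Type*} [Field k] [Ring H] [Bialgebra k H]
    (gx gy x y : H) (p12 p21 p22 : k) (n : ℕ) (hn : 1 ≤ n)
    (hgx : comul (R := k) gx = gx ⊗ₜ[k] gx)
    (hgy : comul (R := k) gy = gy ⊗ₜ[k] gy)
    (habelian : gx * gy = gy * gx)
    (hx : comul (R := k) x = x ⊗ₜ[k] 1 + gx ⊗ₜ[k] x)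
    (hy : comul (R := k) y = y ⊗ₜ[k] 1 + gy ⊗ₜ[k] y)
    (hxgy : x * gy = p12 • (gy * x))
    (hygx : y * gx = p21 • (gx * y))
    (hygy : y * gy = p22 • (gy * y))
    (hp : p12 * p21 * p22 ^ (n - 1) = 1) :
    comul (R := k) (iterSkewComm p12 p22 x y n) =
      (iterSkewComm p12 p22 x y n) ⊗ₜ[k] 1 +
        (gx * gy ^ n) ⊗ₜ[k] (iterSkewComm p12 p22 x y n) :=
  iterSkewComm_skewPrimitive_general gx gy x y p12 p21 p22 n habelian hx hy hxgy hygx hygy hp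
end

section
/- Under the assumptions p12·p21·p13·p31·p23·p32 = 1 and p13·p31 ≠ 1, the two vectors D_id = (p21^{-1} - p12)·e1 + (p31^{-1}p32^{-1} - p13p23)·e2 and D_(23) = (p21^{-1}p23^{-1} - p12p32)·e1 + (p31^{-1} - p13)·e2 in k² are linearly dependent, with D_id = c·D_(23) where c = (p31^{-1}p32^{-1} - p13p23)/(p31^{-1} - p13). -/
/-!
Write `q = p₁₂p₂₁`, `r = p₁₃p₃₁`, `s = p₂₃p₃₂`. Factoring out inverses, the determinant of `D_id` and
`D₍₂₃₎` is `p₂₁⁻¹p₃₁⁻¹s⁻¹` times `s(1 - q)(1 - r) - (1 - rs)(1 - qs) = (qrs - 1)(1 - s)`, which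
vanishes since `qrs = 1`. The second coordinate `p₃₁⁻¹ - p₁₃ = p₃₁⁻¹(1 - r)` of `D₍₂₃₎` is nonzero,
so `D_id` is the multiple of `D₍₂₃₎` read off from the second coordinates.
-/

theorem vec2_eq_div_smul {K : Type*} [Field K] {x y z w : K} (hw : w ≠ 0)
    (hdet : x * w = y * z) : (![x, y] : Fin 2 → K) = (y / w) • ![z, w] := by
  ext i
  fin_cases i
  · simp only [Fin.zero_eta, Fin.isValue, Pi.smul_apply, Matrix.cons_val_zero, smul_eq_mul]
    rw [div_mul_eq_mul_div, eq_div_iff hw, hdet]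
  · simp [hw]

theorem inv_sub_ne_zero_of_mul_ne_one {K : Type*} [Field K] {a b : K} (ha : a ≠ 0)
    (h : b * a ≠ 1) : a⁻¹ - b ≠ 0 := by
  rw [sub_ne_zero]
  rintro rfl
  exact h (inv_mul_cancel₀ ha)

theorem cross_mul_eq_of_prod_eq_one {k : Type*} [Field k] {p12 p21 p13 p31 p23 p32 : k}
    (hprod : p12 * p21 * p13 * p31 * p23 * p32 = 1) :
    (p21⁻¹ - p12) * (p31⁻¹ - p13) =
      (p31⁻¹ * p32⁻¹ - p13 * p23) * (p21⁻¹ * p23⁻¹ - p12 * p32) := by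
  have h21 : p21 ≠ 0 := by rintro rfl; simp at hprod
  have h31 : p31 ≠ 0 := by rintro rfl; simp at hprod
  have h23 : p23 ≠ 0 := by rintro rfl; simp at hprod
  have h32 : p32 ≠ 0 := by rintro rfl; simp at hprod
  field_simp
  linear_combination (1 - p23 * p32) * hprod

theorem trilinear_dependence_general {k : Type*} [Field k]
    (p12 p21 p13 p31 p23 p32 : k)
    (hprod : p12 * p21 * p13 * p31 * p23 * p32 = 1)
    (hne : p13 * p31 ≠ 1) :
    (![p21⁻¹ - p12, p31⁻¹ * p32⁻¹ - p13 * p23] : Fin 2 → k) =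
      ((p31⁻¹ * p32⁻¹ - p13 * p23) / (p31⁻¹ - p13)) •
        ![p21⁻¹ * p23⁻¹ - p12 * p32, p31⁻¹ - p13] := by
  have h31 : p31 ≠ 0 := by rintro rfl; simp at hprod
  exact vec2_eq_div_smul (inv_sub_ne_zero_of_mul_ne_one h31 hne)
    (cross_mul_eq_of_prod_eq_one hprod)

/-- Under `p₁₂p₂₁p₁₃p₃₁p₂₃p₃₂ = 1` and `p₁₃p₃₁ ≠ 1`, the vectors
`D_id = (p₂₁⁻¹ - p₁₂, p₃₁⁻¹p₃₂⁻¹ - p₁₃p₂₃)` and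
`D₍₂₃₎ = (p₂₁⁻¹p₂₃⁻¹ - p₁₂p₃₂, p₃₁⁻¹ - p₁₃)` in `k²` are linearly dependent:
`D_id = c • D₍₂₃₎` with `c = (p₃₁⁻¹p₃₂⁻¹ - p₁₃p₂₃)/(p₃₁⁻¹ - p₁₃)`. -/
theorem trilinear_dependence {k : Type*} [Field k]
    (p12 p21 p13 p31 p23 p32 : k)
    (h12 : p12 ≠ 0) (h21 : p21 ≠ 0) (h13 : p13 ≠ 0) (h31 : p31 ≠ 0)
    (h23 : p23 ≠ 0) (h32 : p32 ≠ 0)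
    (hprod : p12 * p21 * p13 * p31 * p23 * p32 = 1)
    (hne : p13 * p31 ≠ 1) :
    (![p21⁻¹ - p12, p31⁻¹ * p32⁻¹ - p13 * p23] : Fin 2 → k) =
      ((p31⁻¹ * p32⁻¹ - p13 * p23) / (p31⁻¹ - p13)) •
        ![p21⁻¹ * p23⁻¹ - p12 * p32, p31⁻¹ - p13] :=
  trilinear_dependence_general p12 p21 p13 p31 p23 p32 hprod hne
end
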